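/- If A satisfies the RIP of order (2S, δ), then for any two S-sparse vectors x, y with disjoint supports, |⟨Ax, Ay⟩| ≤ δ‖x‖₂‖y‖₂. -/
import Mathlib


/-- `x` is `S`-sparse: at most `S` coordinates are nonzero. -/
def IsSparse {n : ℕ} (S : ℕ) (x : Fin n → ℝ) : Prop :=
  (Finset.univ.filter fun i => x i ≠ 0).card ≤ S

lemma sum_sq_add (m : ℕ) (f g : Fin m → ℝ) :
    ∑ i, (f i + g i) ^ 2 = ∑ i, f i ^ 2 + ∑ i, g i ^ 2 + 2 * ∑ i, f i * g i := by
  rw [Finset.mul_sum, ← Finset.sum_add_distrib, ← Finset.sum_add_distrib]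
  exact Finset.sum_congr rfl fun i _ => by ring

lemma sum_sq_sub (m : ℕ) (f g : Fin m → ℝ) :
    ∑ i, (f i - g i) ^ 2 = ∑ i, f i ^ 2 + ∑ i, g i ^ 2 - 2 * ∑ i, f i * g i := by
  rw [Finset.mul_sum, ← Finset.sum_add_distrib, ← Finset.sum_sub_distrib]
  exact Finset.sum_congr rfl fun i _ => by ring

lemma key_bound (m n S : ℕ) (δ : ℝ)
    (A : Matrix (Fin m) (Fin n) ℝ)
    (hRIP : ∀ v : Fin n → ℝ, IsSparse (2 * S) v →
      (1 - δ) * ∑ j, v j ^ 2 ≤ ∑ i, A.mulVec v i ^ 2 ∧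
      ∑ i, A.mulVec v i ^ 2 ≤ (1 + δ) * ∑ j, v j ^ 2)
    (x y : Fin n → ℝ) (hx : IsSparse S x) (hy : IsSparse S y)
    (hdisj : ∀ i, x i = 0 ∨ y i = 0) :
    |∑ i, A.mulVec x i * A.mulVec y i| ≤
      δ * ((∑ j, x j ^ 2) + ∑ j, y j ^ 2) / 2 := by
  have hcross : ∑ j, x j * y j = 0 := by
    apply Finset.sum_eq_zero
    intro i _
    rcases hdisj i with h | h <;> simp [h]
  have hsparse_add : IsSparse (2 * S) (x + y) := by
    unfold IsSparse at *
    calc (Finset.univ.filter fun i => (x + y) i ≠ 0).card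
        ≤ ((Finset.univ.filter fun i => x i ≠ 0) ∪ (Finset.univ.filter fun i => y i ≠ 0)).card := by
          apply Finset.card_le_card
          intro i hi
          simp only [Finset.mem_filter, Finset.mem_union, Finset.mem_univ, true_and] at *
          by_contra hc
          push_neg at hc
          exact hi (by simp [Pi.add_apply, hc.1, hc.2])
      _ ≤ _ := by
          refine le_trans (Finset.card_union_le _ _) ?_
          omega
  have hsparse_sub : IsSparse (2 * S) (x - y) := by
    unfold IsSparse at *
    calc (Finset.univ.filter fun i => (x - y) i ≠ 0).card
        ≤ ((Finset.univ.filter fun i => x i ≠ 0) ∪ (Finset.univ.filter fun i => y i ≠ 0)).card := by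
          apply Finset.card_le_card
          intro i hi
          simp only [Finset.mem_filter, Finset.mem_union, Finset.mem_univ, true_and] at *
          by_contra hc
          push_neg at hc
          exact hi (by simp [Pi.sub_apply, hc.1, hc.2])
      _ ≤ _ := by
          refine le_trans (Finset.card_union_le _ _) ?_
          omega
  obtain ⟨h1l, h1r⟩ := hRIP (x + y) hsparse_add
  obtain ⟨h2l, h2r⟩ := hRIP (x - y) hsparse_sub
  have hxy_add : ∑ j, (x + y) j ^ 2 = (∑ j, x j ^ 2) + ∑ j, y j ^ 2 := by
    simp only [Pi.add_apply]
    rw [sum_sq_add, hcross]; ring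
  have hxy_sub : ∑ j, (x - y) j ^ 2 = (∑ j, x j ^ 2) + ∑ j, y j ^ 2 := by
    simp only [Pi.sub_apply]
    rw [sum_sq_sub, hcross]; ring
  have hA_add : ∑ i, A.mulVec (x + y) i ^ 2 =
      ∑ i, A.mulVec x i ^ 2 + ∑ i, A.mulVec y i ^ 2 + 2 * ∑ i, A.mulVec x i * A.mulVec y i := by
    simp only [Matrix.mulVec_add, Pi.add_apply]
    exact sum_sq_add m _ _
  have hA_sub : ∑ i, A.mulVec (x - y) i ^ 2 =
      ∑ i, A.mulVec x i ^ 2 + ∑ i, A.mulVec y i ^ 2 - 2 * ∑ i, A.mulVec x i * A.mulVec y i := by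
    simp only [Matrix.mulVec_sub, Pi.sub_apply]
    exact sum_sq_sub m _ _
  rw [hxy_add, hA_add] at h1l h1r
  rw [hxy_sub, hA_sub] at h2l h2r
  rw [abs_le]
  constructor <;> linarith

/-- If A satisfies the RIP of order (2S, δ), then for S-sparse x, y with
disjoint supports, |⟨Ax, Ay⟩| ≤ δ‖x‖₂‖y‖₂. -/
theorem rip_disjoint_inner_bound (m n S : ℕ) (δ : ℝ) (hδ : δ ∈ Set.Ioo (0 : ℝ) 1)
    (A : Matrix (Fin m) (Fin n) ℝ)
    (hRIP : ∀ v : Fin n → ℝ, IsSparse (2 * S) v →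
      (1 - δ) * ∑ j, v j ^ 2 ≤ ∑ i, A.mulVec v i ^ 2 ∧
      ∑ i, A.mulVec v i ^ 2 ≤ (1 + δ) * ∑ j, v j ^ 2)
    (x y : Fin n → ℝ) (hx : IsSparse S x) (hy : IsSparse S y)
    (hdisj : ∀ i, x i = 0 ∨ y i = 0) :
    |∑ i, A.mulVec x i * A.mulVec y i| ≤
      δ * Real.sqrt (∑ j, x j ^ 2) * Real.sqrt (∑ j, y j ^ 2) := by
  obtain ⟨hδ0, hδ1⟩ := hδ
  set a := ∑ j, x j ^ 2 with ha_def
  set b := ∑ j, y j ^ 2 with hb_def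
  have ha0 : 0 ≤ a := Finset.sum_nonneg fun i _ => sq_nonneg _
  have hb0 : 0 ≤ b := Finset.sum_nonneg fun i _ => sq_nonneg _
  by_cases hza : a = 0
  · have hx0 : x = 0 := by
      funext j
      have hj := (Finset.sum_eq_zero_iff_of_nonneg (fun i (_ : i ∈ Finset.univ) => sq_nonneg (x i))).mp hza j (Finset.mem_univ j)
      exact pow_eq_zero_iff (by norm_num) |>.mp hj
    simp [hx0, Matrix.mulVec_zero]
    positivity
  by_cases hzb : b = 0
  · have hy0 : y = 0 := by
      funext j
      have hj := (Finset.sum_eq_zero_iff_of_nonneg (fun i (_ : i ∈ Finset.univ) => sq_nonneg (y i))).mp hzb j (Finset.mem_univ j)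
      exact pow_eq_zero_iff (by norm_num) |>.mp hj
    simp [hy0, Matrix.mulVec_zero]
    positivity
  have ha : 0 < a := lt_of_le_of_ne ha0 (Ne.symm hza)
  have hb : 0 < b := lt_of_le_of_ne hb0 (Ne.symm hzb)
  set sa := Real.sqrt a with hsa_def
  set sb := Real.sqrt b with hsb_def
  have hsa : 0 < sa := Real.sqrt_pos.mpr ha
  have hsb : 0 < sb := Real.sqrt_pos.mpr hb
  have hsa2 : sa ^ 2 = a := Real.sq_sqrt ha0
  have hsb2 : sb ^ 2 = b := Real.sq_sqrt hb0
  -- apply key bound to scaled vectors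
  have hxs : IsSparse S (sb • x) := by
    refine le_trans (Finset.card_le_card ?_) hx
    intro i hi
    simp only [Finset.mem_filter, Finset.mem_univ, true_and, Pi.smul_apply, smul_eq_mul] at *
    exact fun h => hi (by simp [h])
  have hys : IsSparse S (sa • y) := by
    refine le_trans (Finset.card_le_card ?_) hy
    intro i hi
    simp only [Finset.mem_filter, Finset.mem_univ, true_and, Pi.smul_apply, smul_eq_mul] at *
    exact fun h => hi (by simp [h])
  have hdisj' : ∀ i, (sb • x) i = 0 ∨ (sa • y) i = 0 := by
    intro i
    rcases hdisj i with h | h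
    · left; simp [h]
    · right; simp [h]
  have hkey := key_bound m n S δ A hRIP (sb • x) (sa • y) hxs hys hdisj'
  have e1 : ∑ i, A.mulVec (sb • x) i * A.mulVec (sa • y) i =
      sb * sa * ∑ i, A.mulVec x i * A.mulVec y i := by
    simp only [Matrix.mulVec_smul, Pi.smul_apply, smul_eq_mul, Finset.mul_sum]
    exact Finset.sum_congr rfl fun i _ => by ring
  have e2 : ∑ j, (sb • x) j ^ 2 = b * a := by
    simp only [Pi.smul_apply, smul_eq_mul, mul_pow, ← Finset.mul_sum, hsb2, ← ha_def]
  have e3 : ∑ j, (sa • y) j ^ 2 = a * b := by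
    simp only [Pi.smul_apply, smul_eq_mul, mul_pow, ← Finset.mul_sum, hsa2, ← hb_def]
  rw [e1, e2, e3, abs_mul, abs_of_pos (mul_pos hsb hsa)] at hkey
  -- hkey : sb * sa * |inner| ≤ δ * (b*a + a*b) / 2 = δ * a * b
  have hab : δ * (b * a + a * b) / 2 = (δ * sa * sb) * (sa * sb) := by
    rw [← hsa2, ← hsb2]; ring
  rw [hab] at hkey
  have := le_of_mul_le_mul_right (by linarith [hkey] : |∑ i, A.mulVec x i * A.mulVec y i| * (sa * sb) ≤ (δ * sa * sb) * (sa * sb)) (mul_pos hsa hsb)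
  linarith
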